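/- Let Ω ⊆ ℝⁿ be open and u ∈ C¹(Ω). Suppose that for every bounded open Ω' with closure in Ω, every x ∈ closure(Ω') with |Du(x)| = sup_{Ω'} |Du|, every X ∈ D^{2,+}u(x) (the feeble second-order superderivatives of u at x), and every ξ ≥ 0, the affine function A(z) := ξ (X Du(x)) · (z − x) satisfies ‖Du‖_{L^∞(Ω')} ≤ ‖Du + DA‖_{L^∞(Ω')}. If moreover |Du| has no local minima in Ω, then u is a viscosity subsolution of Du ⊗ Du : D²u ≥ 0 on Ω, i.e. for every x ∈ Ω and every X ∈ D^{2,+}u(x) one has X : Du(x) ⊗ Du(x) ≥ 0. -/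

import Mathlib

open scoped BigOperators

/-- The gradient vector `Du(x) ∈ ℝⁿ` of a scalar function `u : ℝⁿ → ℝ`. -/
noncomputable def gradv {n : ℕ} (u : (Fin n → ℝ) → ℝ) (x : Fin n → ℝ) : Fin n → ℝ :=
  fun i => fderiv ℝ u x (Pi.single i 1)

/-- The Euclidean norm of a vector in `ℝⁿ`. -/
noncomputable def gnorm {n : ℕ} (z : Fin n → ℝ) : ℝ :=
  Real.sqrt (∑ i, (z i) ^ 2)

/-- The feeble second-order superderivatives `D^{2,+}u(x)`: symmetric matrices `X` with
`Du(x) ≠ 0` and `u(x+z) ≤ u(x) + Du(x)·z + ½ X : z ⊗ z + o(|z|²)` as `z → 0`. -/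
def D2plus {n : ℕ} (u : (Fin n → ℝ) → ℝ) (x : Fin n → ℝ) :
    Set (Matrix (Fin n) (Fin n) ℝ) :=
  {X | X.IsSymm ∧ gradv u x ≠ 0 ∧
    ∀ ε : ℝ, 0 < ε → ∃ δ : ℝ, 0 < δ ∧ ∀ z : Fin n → ℝ, gnorm z < δ →
      u (x + z) ≤ u x + (∑ i, gradv u x i * z i)
        + (1 / 2) * (∑ i, ∑ j, X i j * z i * z j) + ε * (gnorm z) ^ 2}

/-- The `L^∞` norm `‖Du‖_{L^∞(S)}` of the gradient over a set `S`. -/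
noncomputable def supDu {n : ℕ} (u : (Fin n → ℝ) → ℝ) (S : Set (Fin n → ℝ)) : ℝ :=
  sSup ((fun y => gnorm (gradv u y)) '' S)

/-! Suppose `X : Du(x₀) ⊗ Du(x₀) < 0` and put `p = Du(x₀)`. Then `ξ ↦ |q + ξ X p|` decreases
uniformly for `q` near `p` with `|q| ≤ |p|`. Take `Ω'` to be the part of a small ball around `x₀`
where `|Du| < |p|`: since `|Du|` has no local minimum at `x₀`, the point `x₀` lies in the closure
of `Ω'` and `|p| = sup_{Ω'} |Du|`, while `sup_{Ω'} |Du + ξ X p| < |p|` for a suitable `ξ > 0`,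
contradicting the hypothesis on affine perturbations. -/

open Topology Filter RealInnerProductSpace Matrix

lemma exists_norm_add_smul_le_of_inner_neg {E : Type*} [NormedAddCommGroup E]
    [InnerProductSpace ℝ E] {p v : E} (h : ⟪p, v⟫ < 0) :
    ∃ ξ : ℝ, 0 < ξ ∧ ∃ δ : ℝ, 0 < δ ∧ ∃ K < ‖p‖,
      ∀ q : E, ‖q‖ ≤ ‖p‖ → ‖q - p‖ < δ → ‖q + ξ • v‖ ≤ K := by
  set c := -⟪p, v⟫
  set M := ‖v‖
  have hc : 0 < c := by linarith
  have hp : 0 < ‖p‖ := norm_pos_iff.mpr fun hp => by simp [hp] at h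
  set ξ := c / (M ^ 2 + 1)
  set δ := c / (2 * (M + 1))
  have hξ : 0 < ξ := by positivity
  have hξM : ξ * M ^ 2 < c := by
    rw [div_mul_eq_mul_div, div_lt_iff₀ (by positivity)]; nlinarith
  have hδM : δ * M ≤ c / 2 := by
    rw [div_mul_eq_mul_div, div_le_div_iff₀ (by positivity) two_pos]; nlinarith [norm_nonneg v]
  have hη : 0 < ξ * (c - ξ * M ^ 2) := mul_pos hξ (by linarith)
  refine ⟨ξ, hξ, δ, by positivity, √(‖p‖ ^ 2 - ξ * (c - ξ * M ^ 2)),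
    (Real.sqrt_lt' hp).mpr (by linarith), fun q hq hqp => ?_⟩
  have hqv : ⟪q, v⟫ ≤ -c / 2 := by
    have : ⟪q - p, v⟫ ≤ δ * M :=
      (real_inner_le_norm _ _).trans (mul_le_mul_of_nonneg_right hqp.le (norm_nonneg v))
    rw [inner_sub_left] at this
    linarith
  have hq2 : ‖q‖ ^ 2 ≤ ‖p‖ ^ 2 := pow_le_pow_left₀ (norm_nonneg q) hq 2
  -- `‖q + ξ v‖² = ‖q‖² + 2ξ⟪q, v⟫ + ξ²‖v‖² ≤ ‖p‖² - ξ c + ξ² ‖v‖²`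
  apply Real.le_sqrt_of_sq_le
  rw [norm_add_sq_real, real_inner_smul_right, norm_smul, Real.norm_of_nonneg hξ.le]
  nlinarith

section Gradient

variable {n : ℕ}

lemma gnorm_eq_norm_toLp (z : Fin n → ℝ) :
    gnorm z = ‖(WithLp.toLp 2 z : EuclideanSpace ℝ (Fin n))‖ := by
  simp [gnorm, EuclideanSpace.norm_eq]

lemma continuous_gnorm : Continuous (gnorm (n := n)) := by
  simp only [funext gnorm_eq_norm_toLp]
  exact continuous_norm.comp (PiLp.continuous_toLp 2 _)

lemma sum_sum_mul_mul_eq_dotProduct_mulVec (X : Matrix (Fin n) (Fin n) ℝ) (p : Fin n → ℝ) :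
    ∑ i, ∑ j, X i j * (p i * p j) = p ⬝ᵥ X *ᵥ p := by
  simp only [dotProduct, mulVec, Finset.mul_sum]
  exact Finset.sum_congr rfl fun i _ => Finset.sum_congr rfl fun j _ => by ring

lemma exists_gnorm_add_smul_le_of_dotProduct_neg {p v : Fin n → ℝ} (h : p ⬝ᵥ v < 0) :
    ∃ ξ : ℝ, 0 < ξ ∧ ∃ δ : ℝ, 0 < δ ∧ ∃ K < gnorm p,
      ∀ q, gnorm q ≤ gnorm p → gnorm (q - p) < δ → gnorm (q + ξ • v) ≤ K := by
  have hinner : ⟪(WithLp.toLp 2 p : EuclideanSpace ℝ (Fin n)), WithLp.toLp 2 v⟫ < 0 := by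
    rwa [EuclideanSpace.inner_eq_star_dotProduct, star_trivial, dotProduct_comm]
  obtain ⟨ξ, hξ, δ, hδ, K, hK, hdecr⟩ := exists_norm_add_smul_le_of_inner_neg hinner
  refine ⟨ξ, hξ, δ, hδ, K, by rwa [gnorm_eq_norm_toLp], fun q => ?_⟩
  simpa only [gnorm_eq_norm_toLp, WithLp.toLp_add, WithLp.toLp_sub, WithLp.toLp_smul]
    using hdecr (WithLp.toLp 2 q)

lemma ContDiffOn.continuousOn_gradv {u : (Fin n → ℝ) → ℝ} {Ω : Set (Fin n → ℝ)}
    (hu : ContDiffOn ℝ 1 u Ω) (hΩ : IsOpen Ω) : ContinuousOn (gradv u) Ω :=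
  continuousOn_pi.mpr fun i =>
    (ContinuousLinearMap.apply ℝ ℝ (Pi.single i 1)).continuous.comp_continuousOn
      (hu.continuousOn_fderiv_of_isOpen hΩ le_rfl)

end Gradient

section Sublevel

variable {α β : Type*} [TopologicalSpace α] {f : α → β} {a : α} {U : Set α}

lemma mem_closure_inter_sublevel_of_not_isLocalMin [LinearOrder β] (h : ¬ IsLocalMin f a)
    (hU : U ∈ 𝓝 a) : a ∈ closure (U ∩ {y | f y < f a}) := by
  have hfreq : ∃ᶠ y in 𝓝 a, f y < f a := by
    simpa [IsLocalMin, IsMinFilter, not_eventually] using h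
  exact mem_closure_iff_frequently.mpr ((hfreq.and_eventually hU).mono fun y hy => ⟨hy.2, hy.1⟩)

lemma csSup_image_inter_sublevel_of_not_isLocalMin [ConditionallyCompleteLinearOrder β]
    [TopologicalSpace β] [OrderTopology β] (hf : ContinuousAt f a) (h : ¬ IsLocalMin f a)
    (hU : U ∈ 𝓝 a) : sSup (f '' (U ∩ {y | f y < f a})) = f a := by
  have ha := mem_closure_inter_sublevel_of_not_isLocalMin h hU
  refine (isLUB_of_mem_closure ?_ (mem_closure_image hf ha)).csSup_eq
    ((closure_nonempty_iff.mp ⟨a, ha⟩).image f)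
  rintro _ ⟨y, hy, rfl⟩
  exact hy.2.le

end Sublevel

lemma exists_test_domain_supDu_eq {n : ℕ} {u : (Fin n → ℝ) → ℝ} {Ω : Set (Fin n → ℝ)}
    (hΩ : IsOpen Ω) (hu : ContDiffOn ℝ 1 u Ω) {x : Fin n → ℝ} (hx : x ∈ Ω)
    (hmin : ¬ IsLocalMin (fun y => gnorm (gradv u y)) x) {δ : ℝ} (hδ : 0 < δ) :
    ∃ Ω' : Set (Fin n → ℝ), IsOpen Ω' ∧ Bornology.IsBounded Ω' ∧ closure Ω' ⊆ Ω ∧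
      x ∈ closure Ω' ∧ supDu u Ω' = gnorm (gradv u x) ∧
      ∀ y ∈ Ω', gnorm (gradv u y) ≤ gnorm (gradv u x) ∧ gnorm (gradv u y - gradv u x) < δ := by
  have hgrad := hu.continuousOn_gradv hΩ
  have hf : ContinuousOn (fun y => gnorm (gradv u y)) Ω := continuous_gnorm.comp_continuousOn hgrad
  have hnear : ∀ᶠ y in 𝓝 x, y ∈ Ω ∧ gnorm (gradv u y - gradv u x) < δ :=
    (hΩ.eventually_mem hx).and <| (continuous_gnorm.continuousAt.comp
      ((hgrad.continuousAt (hΩ.mem_nhds hx)).sub continuousAt_const)).eventually_lt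
      continuousAt_const (by simpa [gnorm_eq_norm_toLp] using hδ)
  obtain ⟨r, hr, hrΩ⟩ := Metric.nhds_basis_closedBall.mem_iff.mp hnear
  have hball : Metric.ball x r ⊆ Ω := fun y hy => (hrΩ (Metric.ball_subset_closedBall hy)).1
  refine ⟨Metric.ball x r ∩ {y | gnorm (gradv u y) < gnorm (gradv u x)},
    (hf.mono hball).isOpen_inter_preimage Metric.isOpen_ball isOpen_Iio,
    Metric.isBounded_ball.subset Set.inter_subset_left,
    (closure_mono Set.inter_subset_left).trans
      (Metric.closure_ball_subset_closedBall.trans fun y hy => (hrΩ hy).1),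
    mem_closure_inter_sublevel_of_not_isLocalMin hmin (Metric.ball_mem_nhds x hr),
    csSup_image_inter_sublevel_of_not_isLocalMin (hf.continuousAt (hΩ.mem_nhds hx)) hmin
      (Metric.ball_mem_nhds x hr),
    fun y hy => ⟨hy.2.le, (hrΩ (Metric.ball_subset_closedBall hy.1)).2⟩⟩

/-- Theorem 4.1, first direction: the designated affine minimality property
implies that `u` is a viscosity subsolution of `Du ⊗ Du : D²u ≥ 0` on `Ω`. -/
theorem stmt8 {n : ℕ} (Ω : Set (Fin n → ℝ)) (hΩ : IsOpen Ω)
    (u : (Fin n → ℝ) → ℝ) (hu : ContDiffOn ℝ 1 u Ω)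
    (hmin : ∀ x ∈ Ω, ¬ IsLocalMin (fun y => gnorm (gradv u y)) x)
    (hvar : ∀ Ω' : Set (Fin n → ℝ), IsOpen Ω' → Bornology.IsBounded Ω' →
      closure Ω' ⊆ Ω → ∀ x ∈ closure Ω', gnorm (gradv u x) = supDu u Ω' →
      ∀ X ∈ D2plus u x, ∀ ξ : ℝ, 0 ≤ ξ →
        supDu u Ω' ≤
          sSup ((fun y => gnorm (gradv u y + ξ • X.mulVec (gradv u x))) '' Ω')) :
    ∀ x ∈ Ω, ∀ X ∈ D2plus u x,
      0 ≤ ∑ i, ∑ j, X i j * (gradv u x i * gradv u x j) := by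
  intro x hx X hX
  by_contra! hneg
  rw [sum_sum_mul_mul_eq_dotProduct_mulVec] at hneg
  obtain ⟨ξ, hξ, δ, hδ, K, hK, hdecr⟩ := exists_gnorm_add_smul_le_of_dotProduct_neg hneg
  obtain ⟨Ω', hopen, hbdd, hsub, hclos, hsup, hΩ'⟩ :=
    exists_test_domain_supDu_eq hΩ hu hx (hmin x hx) hδ
  have hbound : sSup ((fun y => gnorm (gradv u y + ξ • X *ᵥ gradv u x)) '' Ω') ≤ K := by
    refine csSup_le ((closure_nonempty_iff.mp ⟨x, hclos⟩).image _) ?_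
    rintro _ ⟨y, hy, rfl⟩
    exact hdecr _ (hΩ' y hy).1 (hΩ' y hy).2
  linarith [hvar Ω' hopen hbdd hsub x hclos hsup.symm X hX ξ hξ.le]
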